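/- arXiv:2402.08719 — 2 statements merged into one kernel-verified Lean document; each statement's English description precedes it below -/
import Mathlib

section
/- Let M be a 24×24 matrix with integer entries, let d ∈ ℝ, and suppose there exists a real linear subspace V ⊆ ℝ²⁴ of dimension at least 4 such that M·v = d·v for every v ∈ V (where M acts on ℝ²⁴ via its real entries). Then d is an algebraic integer (integral over ℤ) and the degree of the minimal polynomial of d over ℚ is at most 6. -/
/-!
The eigenspace of `M` for `d` has dimension at least `4`, so `d` is a root of multiplicity at
least `4` of the characteristic polynomial `χ` of `M`, which is monic with integer coefficients;
in particular `d` is integral over `ℤ`. Over `ℚ` the minimal polynomial of `d` is separable, so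
each of its factors has `d` as a simple root; hence `(minpoly ℚ d) ^ 4` divides `χ`, and
comparing degrees gives `4 · deg (minpoly ℚ d) ≤ 24`.
-/

open Polynomial Module Matrix

theorem Matrix.finrank_le_rootMultiplicity_charpoly {K n : Type*} [Field K] [Fintype n]
    [DecidableEq n] (A : Matrix n n K) (μ : K) (V : Submodule K (n → K))
    (hV : ∀ v ∈ V, A *ᵥ v = μ • v) : finrank K V ≤ A.charpoly.rootMultiplicity μ := by
  have hle : V ≤ End.eigenspace (toLin' A) μ := fun v hv ↦
    End.mem_eigenspace_iff.mpr (by simpa using hV v hv)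
  calc finrank K V ≤ finrank K (End.eigenspace (toLin' A) μ) := Submodule.finrank_mono hle
    _ ≤ (toLin' A).charpoly.rootMultiplicity μ := LinearMap.finrank_eigenspace_le _ μ
    _ = A.charpoly.rootMultiplicity μ := by rw [charpoly_toLin']

theorem minpoly.pow_dvd_of_le_rootMultiplicity {K L : Type*} [Field K] [Field L] [Algebra K L]
    {a : L} (ha : IsSeparable K a) {n : ℕ} {r : K[X]}
    (h : n ≤ (r.map (algebraMap K L)).rootMultiplicity a) : minpoly K a ^ n ∣ r := by
  induction n generalizing r with
  | zero => simp
  | succ n ih =>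
    have hr : r.map (algebraMap K L) ≠ 0 := by
      rintro h0
      simp [h0] at h
    obtain ⟨r', rfl⟩ : minpoly K a ∣ r := minpoly.dvd K a <| by
      rw [aeval_def, eval₂_eq_eval_map]
      exact (rootMultiplicity_pos hr).mp (by omega)
    rw [Polynomial.map_mul] at h hr
    have hsimple : ((minpoly K a).map (algebraMap K L)).rootMultiplicity a ≤ 1 :=
      rootMultiplicity_le_one_of_separable (Separable.map ha) a
    rw [rootMultiplicity_mul hr] at h
    rw [pow_succ']
    exact mul_dvd_mul_left _ (ih (by omega))

/-- If a `24 × 24` integral matrix acts as multiplication by `d` on a real subspace of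
dimension at least `4`, then `d` is an algebraic integer of degree at most `6`. -/
theorem stmt3 (M : Matrix (Fin 24) (Fin 24) ℤ) (d : ℝ)
    (V : Submodule ℝ (Fin 24 → ℝ)) (hV : 4 ≤ Module.finrank ℝ V)
    (hMV : ∀ v ∈ V, (M.map (Int.cast : ℤ → ℝ)).mulVec v = d • v) :
    IsIntegral ℤ d ∧ (minpoly ℚ d).natDegree ≤ 6 := by
  have hχ : M.charpoly.map (algebraMap ℤ ℝ) ≠ 0 := (M.charpoly_monic.map _).ne_zero
  have hmult : 4 ≤ (M.charpoly.map (algebraMap ℤ ℝ)).rootMultiplicity d := by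
    rw [← Matrix.charpoly_map]
    exact hV.trans (finrank_le_rootMultiplicity_charpoly _ d V hMV)
  have hint : IsIntegral ℤ d := ⟨M.charpoly, M.charpoly_monic, by
    rw [eval₂_eq_eval_map]
    exact (rootMultiplicity_pos hχ).mp (by omega)⟩
  refine ⟨hint, ?_⟩
  have hχℚ : (M.charpoly.map (algebraMap ℤ ℚ)).map (algebraMap ℚ ℝ) =
      M.charpoly.map (algebraMap ℤ ℝ) := by
    rw [Polynomial.map_map, ← IsScalarTower.algebraMap_eq]
  have hdvd : minpoly ℚ d ^ 4 ∣ M.charpoly.map (algebraMap ℤ ℚ) :=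
    minpoly.pow_dvd_of_le_rootMultiplicity (minpoly.irreducible hint.tower_top).separable
      (hχℚ ▸ hmult)
  have hdeg := natDegree_le_of_dvd hdvd (M.charpoly_monic.map _).ne_zero
  rw [natDegree_pow, M.charpoly_monic.natDegree_map, charpoly_natDegree_eq_dim,
    Fintype.card_fin] at hdeg
  omega
end

section
/- Let V be a vector space over ℚ, and let f : V → V be a linear endomorphism such that f^N = id for some N ≥ 1 and such that id − f is injective. Then id − f is bijective, and its inverse is −(1/N)·∑_{k=1}^{N−1} k·f^k; that is, (id − f) ∘ (−(1/N)·∑_{k=1}^{N−1} k·f^k) = id and (−(1/N)·∑_{k=1}^{N−1} k·f^k) ∘ (id − f) = id. -/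
/-!
Since `(1 - x) * ∑_{k<N} x^k = 1 - x^N = 0` and `1 - x` is left-cancellable, the geometric sum
`∑_{k<N} x^k` vanishes. Summing by parts, `(1 - x) * ∑_{k<N} k x^k = x * ∑_{k<N} x^k - N x^N`,
which is therefore `-N`; so `-(1/N) ∑ k x^k` is a right inverse of `1 - x`, and a left inverse
too because it is a polynomial in `x`.
-/

open Finset

theorem Module.End.isLeftRegular_of_injective {R M : Type*} [Semiring R] [AddCommMonoid M]
    [Module R M] {f : Module.End R M} (hf : Function.Injective f) : IsLeftRegular f :=
  hf.injective_linearMapComp_left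

section Ring

variable {R : Type*} [Ring R]

theorem one_sub_mul_sum_range_nsmul_pow (x : R) (N : ℕ) :
    (1 - x) * ∑ k ∈ range N, k • x ^ k = x * ∑ k ∈ range N, x ^ k - N • x ^ N := by
  induction N with
  | zero => simp
  | succ n ih =>
    rw [sum_range_succ, mul_add, ih, sum_range_succ, mul_add, mul_smul_comm, sub_mul, one_mul,
      ← pow_succ', smul_sub, succ_nsmul]
    abel

theorem sum_Ico_one_nsmul_pow (x : R) (N : ℕ) :
    ∑ k ∈ Ico 1 N, k • x ^ k = ∑ k ∈ range N, k • x ^ k :=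
  sum_subset (fun k hk => mem_range.2 (mem_Ico.1 hk).2) fun k hk hk' => by
    obtain rfl : k = 0 := by simp_all
    exact zero_smul ℕ _

theorem geom_sum_eq_zero_of_pow_eq_one {x : R} {N : ℕ} (hx : x ^ N = 1)
    (hreg : IsLeftRegular (1 - x)) : ∑ k ∈ range N, x ^ k = 0 :=
  hreg <| show (1 - x) * _ = (1 - x) * 0 by rw [mul_neg_geom_sum, hx, sub_self, mul_zero]

theorem one_sub_mul_sum_Ico_nsmul_pow_of_pow_eq_one {x : R} {N : ℕ} (hx : x ^ N = 1)
    (hreg : IsLeftRegular (1 - x)) : (1 - x) * ∑ k ∈ Ico 1 N, k • x ^ k = -(N • 1) := by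
  rw [sum_Ico_one_nsmul_pow, one_sub_mul_sum_range_nsmul_pow,
    geom_sum_eq_zero_of_pow_eq_one hx hreg, hx, mul_zero, zero_sub]

variable [Algebra ℚ R]

/-- The inverse of `1 - x` when `x ^ N = 1` and `1 - x` is left-cancellable. -/
noncomputable def cyclicInverse (N : ℕ) (x : R) : R :=
  -((1 : ℚ) / N) • ∑ k ∈ Ico 1 N, (k : ℚ) • x ^ k

theorem commute_cyclicInverse (N : ℕ) (x : R) : Commute x (cyclicInverse N x) :=
  (Commute.sum_right _ _ _ fun k _ =>
    ((Commute.refl x).pow_right k).smul_right (k : ℚ)).smul_right _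

theorem one_sub_mul_cyclicInverse {x : R} {N : ℕ} (hN : N ≠ 0) (hx : x ^ N = 1)
    (hreg : IsLeftRegular (1 - x)) : (1 - x) * cyclicInverse N x = 1 := by
  simp_rw [cyclicInverse, Nat.cast_smul_eq_nsmul]
  rw [mul_smul_comm, one_sub_mul_sum_Ico_nsmul_pow_of_pow_eq_one hx hreg, smul_neg, neg_smul,
    neg_neg, ← Nat.cast_smul_eq_nsmul ℚ, smul_smul, one_div,
    inv_mul_cancel₀ (by exact_mod_cast hN), one_smul]

theorem cyclicInverse_mul_one_sub {x : R} {N : ℕ} (hN : N ≠ 0) (hx : x ^ N = 1)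
    (hreg : IsLeftRegular (1 - x)) : cyclicInverse N x * (1 - x) = 1 := by
  rw [← ((Commute.one_left _).sub_left (commute_cyclicInverse N x)).eq,
    one_sub_mul_cyclicInverse hN hx hreg]

end Ring

/-- If `f` is a `ℚ`-linear endomorphism with `f ^ N = 1` and `1 - f` injective, then
`1 - f` is bijective with inverse `-(1/N) • ∑_{k=1}^{N-1} k • f^k`. -/
theorem stmt7 {V : Type*} [AddCommGroup V] [Module ℚ V]
    (f : V →ₗ[ℚ] V) (N : ℕ) (hN : 1 ≤ N) (hfN : f ^ N = 1)
    (hinj : Function.Injective ⇑(1 - f)) :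
    Function.Bijective ⇑(1 - f) ∧
      (1 - f) * (-((1 : ℚ) / N) • ∑ k ∈ Finset.Ico 1 N, (k : ℚ) • f ^ k) = 1 ∧
      (-((1 : ℚ) / N) • ∑ k ∈ Finset.Ico 1 N, (k : ℚ) • f ^ k) * (1 - f) = 1 := by
  have hN0 : N ≠ 0 := Nat.one_le_iff_ne_zero.1 hN
  have hreg := Module.End.isLeftRegular_of_injective hinj
  have hleft := one_sub_mul_cyclicInverse hN0 hfN hreg
  have hright := cyclicInverse_mul_one_sub hN0 hfN hreg
  exact ⟨(Module.End.isUnit_iff _).1 ⟨⟨_, _, hleft, hright⟩, rfl⟩, hleft, hright⟩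
end
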